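/- arXiv:2410.20032 — 2 statements merged into one kernel-verified Lean document; each statement's English description precedes it below -/
import Mathlib

section
/- Let T > 0, k > 0, and let θ : [0,T] × ℝ → ℝ be twice continuously differentiable. Assume: (i) whenever (t,y) ∈ [0,T]×[−k,k] satisfies θ(t,y) = 0 and ∂_yθ(t,y) = 0, one has ∂_tθ(t,y) ≠ 0; and (ii) there is no (t,y) ∈ [0,T]×[−k,k] with θ(t,y) = 0, ∂_yθ(t,y) = 0 and ∂²_{yy}θ(t,y) = 0. Then the set { (t,y) ∈ [0,T]×[−k,k] : θ(t,y) = 0 and ∂_yθ(t,y) = 0 } is finite. -/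
/-!
The set is the intersection of the compact rectangle with the zero set of
`F = (θ, ∂_yθ)`. At such a zero `∂_yθ = 0`, so the Jacobian of `F` is triangular with diagonal
`∂_tθ, ∂²_{yy}θ`, both nonzero by the hypotheses. An injective derivative keeps `F` away from
`F p` on a punctured neighbourhood of `p`, so every zero is isolated.
A compact discrete set is finite.
-/

open Set Filter Topology

section PartialDerivatives

variable {𝕜 : Type*} [NontriviallyNormedField 𝕜]
  {E F : Type*} [NormedAddCommGroup E] [NormedSpace 𝕜 E] [NormedAddCommGroup F] [NormedSpace 𝕜 F]

theorem deriv_comp_prodMk_left {f : E × 𝕜 → F} {a : E} {b : 𝕜}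
    (hf : DifferentiableAt 𝕜 f (a, b)) :
    deriv (fun y => f (a, y)) b = fderiv 𝕜 f (a, b) (0, 1) :=
  (hf.hasFDerivAt.comp_hasDerivAt b ((hasDerivAt_const b a).prodMk (hasDerivAt_id b))).deriv

theorem deriv_comp_prodMk_right {f : 𝕜 × E → F} {a : 𝕜} {b : E}
    (hf : DifferentiableAt 𝕜 f (a, b)) :
    deriv (fun t => f (t, b)) a = fderiv 𝕜 f (a, b) (1, 0) :=
  (hf.hasFDerivAt.comp_hasDerivAt a ((hasDerivAt_id a).prodMk (hasDerivAt_const a b))).deriv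

end PartialDerivatives

theorem ContinuousLinearMap.prod_injective_of_triangular {𝕜 : Type*} [Field 𝕜]
    [TopologicalSpace 𝕜] {L₁ L₂ : 𝕜 × 𝕜 →L[𝕜] 𝕜}
    (h₁₂ : L₁ (0, 1) = 0) (h₁₁ : L₁ (1, 0) ≠ 0) (h₂₂ : L₂ (0, 1) ≠ 0) :
    Function.Injective (L₁.prod L₂) := by
  rw [injective_iff_map_eq_zero]
  rintro ⟨x, y⟩ hv
  have hdecomp : ((x, y) : 𝕜 × 𝕜) = x • (1, 0) + y • (0, 1) := by simp
  have hL₁ : L₁ (x, y) = 0 := congrArg Prod.fst hv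
  rw [hdecomp, map_add, map_smul, map_smul, h₁₂, smul_zero, add_zero, smul_eq_mul] at hL₁
  have hx : x = 0 := (mul_eq_zero.mp hL₁).resolve_right h₁₁
  have hL₂ : L₂ (x, y) = 0 := congrArg Prod.snd hv
  rw [hdecomp, map_add, map_smul, map_smul, hx, zero_smul, zero_add, smul_eq_mul] at hL₂
  have hy : y = 0 := (mul_eq_zero.mp hL₂).resolve_right h₂₂
  simp [hx, hy]

theorem isDiscrete_of_subset_preimage_of_injective_fderiv {𝕜 : Type*}
    [NontriviallyNormedField 𝕜] [CompleteSpace 𝕜]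
    {E F : Type*} [NormedAddCommGroup E] [NormedSpace 𝕜 E] [FiniteDimensional 𝕜 E]
    [NormedAddCommGroup F] [NormedSpace 𝕜 F]
    {f : E → F} {c : F} {s : Set E} (hs : s ⊆ f ⁻¹' {c})
    (hf : ∀ x ∈ s, DifferentiableAt 𝕜 f x) (hinj : ∀ x ∈ s, Function.Injective (fderiv 𝕜 f x)) :
    IsDiscrete s := by
  rw [isDiscrete_iff_nhdsNE]
  intro x hx
  obtain ⟨C, -, hC⟩ := (fderiv 𝕜 f x : E →ₗ[𝕜] F).exists_antilipschitzWith
    (LinearMap.ker_eq_bot.mpr (hinj x hx))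
  have hne : ∀ᶠ z in 𝓝[≠] x, f z ≠ c := (hf x hx).hasFDerivAt.eventually_ne ⟨C, hC⟩
  rw [inf_principal_eq_bot]
  exact hne.mono fun z hz hzs => hz (hs hzs)

theorem stmt_5_general (T k : ℝ)
    (θ : ℝ × ℝ → ℝ) (hθ : ContDiff ℝ 2 θ)
    (h1 : ∀ p ∈ Icc (0:ℝ) T ×ˢ Icc (-k) k,
      θ p = 0 → deriv (fun y => θ (p.1, y)) p.2 = 0 →
        deriv (fun t => θ (t, p.2)) p.1 ≠ 0)
    (h2 : ¬ ∃ p ∈ Icc (0:ℝ) T ×ˢ Icc (-k) k,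
      θ p = 0 ∧ deriv (fun y => θ (p.1, y)) p.2 = 0 ∧
        deriv (fun y => deriv (fun y' => θ (p.1, y')) y) p.2 = 0) :
    {p : ℝ × ℝ | p ∈ Icc (0:ℝ) T ×ˢ Icc (-k) k ∧
      θ p = 0 ∧ deriv (fun y => θ (p.1, y)) p.2 = 0}.Finite := by
  set g : ℝ × ℝ → ℝ := fun p => fderiv ℝ θ p (0, 1)
  have hθd : Differentiable ℝ θ := hθ.differentiable (by norm_num)
  have hgd : Differentiable ℝ g :=
    ((hθ.fderiv_right (by norm_num)).clm_apply contDiff_const).differentiable one_ne_zero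
  have hθ_y (p : ℝ × ℝ) : deriv (fun y => θ (p.1, y)) p.2 = g p :=
    deriv_comp_prodMk_left (hθd p)
  have hθ_t (p : ℝ × ℝ) : deriv (fun t => θ (t, p.2)) p.1 = fderiv ℝ θ p (1, 0) :=
    deriv_comp_prodMk_right (hθd p)
  have hθ_yy (p : ℝ × ℝ) :
      deriv (fun y => deriv (fun y' => θ (p.1, y')) y) p.2 = fderiv ℝ g p (0, 1) := by
    rw [funext fun y => hθ_y (p.1, y)]
    exact deriv_comp_prodMk_left (hgd p)
  set F : ℝ × ℝ → ℝ × ℝ := fun p => (θ p, g p)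
  have hS : {p : ℝ × ℝ | p ∈ Icc (0:ℝ) T ×ˢ Icc (-k) k ∧
      θ p = 0 ∧ deriv (fun y => θ (p.1, y)) p.2 = 0} =
      Icc (0:ℝ) T ×ˢ Icc (-k) k ∩ F ⁻¹' {0} := by
    ext p
    simp [F, hθ_y, Prod.ext_iff]
  rw [hS]
  refine ((isCompact_Icc.prod isCompact_Icc).inter_right
    (isClosed_singleton.preimage (hθd.continuous.prodMk hgd.continuous))).finite
    (isDiscrete_of_subset_preimage_of_injective_fderiv inter_subset_right
      (fun p _ => (hθd p).prodMk (hgd p)) ?_)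
  rintro p ⟨hpK, hFp⟩
  obtain ⟨hθp, hgp⟩ := Prod.ext_iff.mp hFp
  rw [(hθd p).fderiv_prodMk (hgd p)]
  refine ContinuousLinearMap.prod_injective_of_triangular hgp ?_ ?_
  · rw [← hθ_t]
    exact h1 p hpK hθp (by rwa [hθ_y])
  · exact fun h => h2 ⟨p, hpK, hθp, by rwa [hθ_y], by rwa [hθ_yy]⟩

/-- If `θ` is `C²`, every solution of `θ = ∂_yθ = 0` in `[0,T]×[−k,k]` has `∂_tθ ≠ 0`,
and the system `θ = ∂_yθ = ∂²_{yy}θ = 0` has no solution in `[0,T]×[−k,k]`, then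
the set of solutions of `θ = ∂_yθ = 0` in `[0,T]×[−k,k]` is finite. -/
theorem stmt_5 (T k : ℝ) (hT : 0 < T) (hk : 0 < k)
    (θ : ℝ × ℝ → ℝ) (hθ : ContDiff ℝ 2 θ)
    (h1 : ∀ p ∈ Icc (0:ℝ) T ×ˢ Icc (-k) k,
      θ p = 0 → deriv (fun y => θ (p.1, y)) p.2 = 0 →
        deriv (fun t => θ (t, p.2)) p.1 ≠ 0)
    (h2 : ¬ ∃ p ∈ Icc (0:ℝ) T ×ˢ Icc (-k) k,
      θ p = 0 ∧ deriv (fun y => θ (p.1, y)) p.2 = 0 ∧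
        deriv (fun y => deriv (fun y' => θ (p.1, y')) y) p.2 = 0) :
    {p : ℝ × ℝ | p ∈ Icc (0:ℝ) T ×ˢ Icc (-k) k ∧
      θ p = 0 ∧ deriv (fun y => θ (p.1, y)) p.2 = 0}.Finite :=
  stmt_5_general T k θ hθ h1 h2
end

section
/- Let 0 ≤ τ < t₁ and P ≥ 0. Let p, r : [τ,t₁] → ℝ be measurable with |p(t)| ≤ P for all t, and r integrable with r(t) ≥ 0 for almost every t. Let w : [τ,t₁] → ℝ be Lipschitz with w(τ) = 0 and w'(t) = −p(t)·w(t) − r(t) for almost every t ∈ [τ,t₁]. Then for every t ∈ [τ,t₁], w(t) ≤ −e^{−P(t−τ)}·∫_τ^t r(s) ds ≤ 0. -/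
open MeasureTheory Set intervalIntegral

open Filter Real

/-! With the integrating factor `E(t) = exp ∫_τ^t p`, the equation becomes `(w E)' = -r E` a.e.;
since `w` is Lipschitz and `E` is absolutely continuous, `w E` can be integrated, giving
`w(t) = -∫_τ^t r(s) exp(-∫_s^t p) ds`. As `|p| ≤ P`, the kernel `exp(-∫_s^t p)` is at least
`e^{-P(t-τ)}`, and `r ≥ 0` does the rest. -/

theorem LipschitzOnWith.comp_absolutelyContinuousOnInterval {X Y : Type*}
    [PseudoMetricSpace X] [PseudoMetricSpace Y] {g : X → Y} {f : ℝ → X} {K : NNReal} {s : Set X}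
    {a b : ℝ} (hg : LipschitzOnWith K g s) (hf : AbsolutelyContinuousOnInterval f a b)
    (hfs : MapsTo f (uIcc a b) s) :
    AbsolutelyContinuousOnInterval (fun x => g (f x)) a b := by
  unfold AbsolutelyContinuousOnInterval at hf ⊢
  refine squeeze_zero' (Eventually.of_forall fun _ => Finset.sum_nonneg fun _ _ => dist_nonneg)
    ?_ (by simpa using hf.const_mul (K : ℝ))
  rw [eventually_inf_principal]
  filter_upwards with E hE
  rw [Finset.mul_sum]
  gcongr with i hi
  exact hg.dist_le_mul _ (hfs (hE.1 i hi).1) _ (hfs (hE.1 i hi).2)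

theorem AbsolutelyContinuousOnInterval.comp_contDiff {F : Type*} [NormedAddCommGroup F]
    [NormedSpace ℝ F] {g : ℝ → F} {f : ℝ → ℝ} {a b : ℝ} (hg : ContDiff ℝ 1 g)
    (hf : AbsolutelyContinuousOnInterval f a b) :
    AbsolutelyContinuousOnInterval (fun x => g (f x)) a b := by
  obtain ⟨C, hC⟩ := hf.exists_bound
  obtain ⟨K, hK⟩ := hg.contDiffOn.exists_lipschitzOnWith one_ne_zero (convex_closedBall 0 C)
    (isCompact_closedBall 0 C)
  exact hK.comp_absolutelyContinuousOnInterval hf fun x hx => mem_closedBall_zero_iff.2 (hC x hx)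

theorem AbsolutelyContinuousOnInterval.mul_exp_integral_sub_eq {w p r : ℝ → ℝ} {a b : ℝ}
    (hw : AbsolutelyContinuousOnInterval w a b) (hp : IntervalIntegrable p volume a b)
    (hwd : ∀ᵐ x, x ∈ uIcc a b → HasDerivAt w (-p x * w x - r x) x) :
    w b * exp (∫ x in a..b, p x) - w a = -∫ x in a..b, r x * exp (∫ y in a..x, p y) := by
  set E : ℝ → ℝ := fun x => exp (∫ y in a..x, p y)
  have hE : AbsolutelyContinuousOnInterval E a b :=
    (hp.absolutelyContinuousOnInterval_intervalIntegral left_mem_uIcc).comp_contDiff contDiff_exp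
  have hderiv : ∀ᵐ x, x ∈ uIcc a b → HasDerivAt (fun x => w x * E x) (-(r x * E x)) x := by
    filter_upwards [hwd, hp.ae_hasDerivAt_integral] with x hwx hqx hx
    exact ((hwx hx).mul (hqx hx a left_mem_uIcc).exp).congr_deriv (by ring)
  have hFTC := (hw.fun_mul hE).integral_deriv_eq_sub
  rw [integral_congr_ae (hderiv.mono fun x h hx => (h (uIoc_subset_uIcc hx)).deriv),
    intervalIntegral.integral_neg] at hFTC
  simpa [E] using hFTC.symm

theorem le_neg_exp_mul_integral_of_hasDerivAt_linear {w p r : ℝ → ℝ} {a b P : ℝ} (hab : a ≤ b)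
    (hw : AbsolutelyContinuousOnInterval w a b) (hwa : w a = 0)
    (hp : IntervalIntegrable p volume a b) (hpP : ∀ x ∈ Icc a b, |p x| ≤ P)
    (hr : IntervalIntegrable r volume a b) (hr0 : ∀ᵐ x ∂volume.restrict (Icc a b), 0 ≤ r x)
    (hwd : ∀ᵐ x ∂volume.restrict (Icc a b), HasDerivAt w (-p x * w x - r x) x) :
    w b ≤ -exp (-(P * (b - a))) * ∫ x in a..b, r x := by
  set q : ℝ → ℝ := fun x => ∫ y in a..x, p y
  have hduhamel := hw.mul_exp_integral_sub_eq hp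
    (by rwa [uIcc_of_le hab, ← ae_restrict_iff' measurableSet_Icc])
  have hw_eq : w b = -∫ x in a..b, r x * exp (q x - q b) := by
    simp only [exp_sub, ← mul_div_assoc, intervalIntegral.integral_div]
    rw [hwa, sub_zero] at hduhamel
    field_simp
    linarith
  have hkernel_ge : ∀ x ∈ Icc a b, exp (-(P * (b - a))) ≤ exp (q x - q b) := by
    intro x hx
    have hP : 0 ≤ P := (abs_nonneg _).trans (hpP a ⟨le_rfl, hab⟩)
    have hqxb : q b - q x = ∫ y in x..b, p y :=
      integral_interval_sub_left (hp.mono_set (by simp [uIcc_of_le hab]))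
        (hp.mono_set (uIcc_subset_uIcc_left (by simpa [uIcc_of_le hab] using hx)))
    have hint : ‖∫ y in x..b, p y‖ ≤ P * |b - x| :=
      intervalIntegral.norm_integral_le_of_norm_le_const fun y hy => by
        rw [uIoc_of_le hx.2] at hy
        exact hpP y ⟨hx.1.trans hy.1.le, hy.2⟩
    rw [Real.norm_eq_abs, abs_of_nonneg (sub_nonneg.2 hx.2)] at hint
    gcongr
    nlinarith [abs_le.1 hint, hx.1]
  have hq : ContinuousOn q (uIcc a b) :=
    (hp.absolutelyContinuousOnInterval_intervalIntegral left_mem_uIcc).continuousOn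
  have hmono : ∫ x in a..b, exp (-(P * (b - a))) * r x ≤ ∫ x in a..b, r x * exp (q x - q b) :=
    integral_mono_ae_restrict hab (hr.const_mul _)
      (hr.mul_continuousOn ((hq.sub continuousOn_const).rexp)) (by
        filter_upwards [hr0, ae_restrict_mem measurableSet_Icc] with x hrx hx
        rw [mul_comm]
        exact mul_le_mul_of_nonneg_left (hkernel_ge x hx) hrx)
  rw [intervalIntegral.integral_const_mul] at hmono
  linarith

theorem stmt_15_general (τ t₁ P : ℝ)
    (p r : ℝ → ℝ) (hpmeas : Measurable p)
    (hpb : ∀ t ∈ Icc τ t₁, |p t| ≤ P)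
    (hrint : IntegrableOn r (Icc τ t₁))
    (hr0 : ∀ᵐ t ∂(volume.restrict (Icc τ t₁)), 0 ≤ r t)
    (w w' : ℝ → ℝ) (K : NNReal)
    (hwLip : LipschitzOnWith K w (Icc τ t₁))
    (hw0 : w τ = 0)
    (hwd : ∀ᵐ t ∂(volume.restrict (Icc τ t₁)), HasDerivAt w (w' t) t)
    (hweq : ∀ᵐ t ∂(volume.restrict (Icc τ t₁)), w' t = -(p t) * w t - r t) :
    ∀ t ∈ Icc τ t₁,
      w t ≤ -(Real.exp (-(P * (t - τ)))) * ∫ s in τ..t, r s ∧ w t ≤ 0 := by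
  intro t ht
  have hsub : Icc τ t ⊆ Icc τ t₁ := Icc_subset_Icc_right ht.2
  have hp : IntervalIntegrable p volume τ t :=
    (intervalIntegrable_const (c := P)).mono_fun' hpmeas.aestronglyMeasurable <| by
      rw [uIoc_of_le ht.1]
      filter_upwards [ae_restrict_mem measurableSet_Ioc] with s hs
      exact hpb s (hsub (Ioc_subset_Icc_self hs))
  have hr : IntervalIntegrable r volume τ t :=
    (intervalIntegrable_iff_integrableOn_Icc_of_le ht.1).2 (hrint.mono_set hsub)
  have hwd' : ∀ᵐ s ∂volume.restrict (Icc τ t), HasDerivAt w (-p s * w s - r s) s :=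
    ae_restrict_of_ae_restrict_of_subset hsub <| by
      filter_upwards [hwd, hweq] with s hs hs' using hs' ▸ hs
  have hbound := le_neg_exp_mul_integral_of_hasDerivAt_linear ht.1
    (hwLip.mono (uIcc_of_le ht.1 ▸ hsub)).absolutelyContinuousOnInterval hw0 hp
    (fun s hs => hpb s (hsub hs)) hr (ae_restrict_of_ae_restrict_of_subset hsub hr0) hwd'
  have hr_nonneg : 0 ≤ ∫ s in τ..t, r s :=
    integral_nonneg_of_ae_restrict ht.1 (ae_restrict_of_ae_restrict_of_subset hsub hr0)
  refine ⟨hbound, hbound.trans ?_⟩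
  rw [neg_mul]
  exact neg_nonpos.2 (mul_nonneg (exp_pos _).le hr_nonneg)

/-- Exponential upper bound for the perturbation along a characteristic: if `w(τ) = 0` and
`w' = −p·w − r` a.e. with `|p| ≤ P` and `r ≥ 0` a.e., then
`w(t) ≤ −e^{−P(t−τ)} ∫_τ^t r ≤ 0` for every `t ∈ [τ,t₁]`. -/
theorem stmt_15 (τ t₁ P : ℝ) (hτ : 0 ≤ τ) (ht : τ < t₁) (hP : 0 ≤ P)
    (p r : ℝ → ℝ) (hpmeas : Measurable p) (hrmeas : Measurable r)
    (hpb : ∀ t ∈ Icc τ t₁, |p t| ≤ P)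
    (hrint : IntegrableOn r (Icc τ t₁))
    (hr0 : ∀ᵐ t ∂(volume.restrict (Icc τ t₁)), 0 ≤ r t)
    (w w' : ℝ → ℝ) (K : NNReal)
    (hwLip : LipschitzOnWith K w (Icc τ t₁))
    (hw0 : w τ = 0)
    (hwd : ∀ᵐ t ∂(volume.restrict (Icc τ t₁)), HasDerivAt w (w' t) t)
    (hweq : ∀ᵐ t ∂(volume.restrict (Icc τ t₁)), w' t = -(p t) * w t - r t) :
    ∀ t ∈ Icc τ t₁,
      w t ≤ -(Real.exp (-(P * (t - τ)))) * ∫ s in τ..t, r s ∧ w t ≤ 0 :=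
  stmt_15_general τ t₁ P p r hpmeas hpb hrint hr0 w w' K hwLip hw0 hwd hweq
end
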